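/- For every exponent α > 0 there exists a constant C = C(α) > 0 such that for all complex numbers a, b one has | (a+b)|a+b|^α − a|a|^α − b|b|^α | ≤ C ( |a| |b|^α + |b| |a|^α ). -/

import Mathlib

/-!
With `S = ‖a + b‖`, the difference is `(S ^ α - ‖a‖ ^ α) • a + (S ^ α - ‖b‖ ^ α) • b`. By symmetry
assume `‖b‖ ≤ ‖a‖`, so that `S ≤ 2‖a‖` and `|S - ‖a‖| ≤ ‖b‖`. The second term is then at most
`(2‖a‖) ^ α ‖b‖`. For the first, `x ↦ x ^ α` is `α`-Hölder on `[0, ∞)` when `α ≤ 1`, giving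
`‖a‖ ‖b‖ ^ α`, and is `α (2‖a‖) ^ (α - 1)`-Lipschitz on `[0, 2‖a‖]` when `1 ≤ α`, giving
`α 2 ^ α ‖b‖ ‖a‖ ^ α`.
-/

open Real Set

namespace Real

lemma abs_rpow_sub_rpow_le_rpow_abs_sub {p x y : ℝ} (hp₀ : 0 ≤ p) (hp₁ : p ≤ 1)
    (hx : 0 ≤ x) (hy : 0 ≤ y) : |x ^ p - y ^ p| ≤ |x - y| ^ p := by
  wlog hyx : y ≤ x generalizing x y
  · rw [abs_sub_comm, abs_sub_comm x]
    exact this hy hx (le_of_not_ge hyx)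
  have hsub : x ^ p ≤ y ^ p + (x - y) ^ p := by
    simpa using rpow_add_le_add_rpow hy (sub_nonneg.2 hyx) hp₀ hp₁
  rw [abs_of_nonneg (sub_nonneg.2 (rpow_le_rpow hy hyx hp₀)), abs_of_nonneg (sub_nonneg.2 hyx)]
  linarith

lemma abs_rpow_sub_rpow_le_mul_abs_sub {p M x y : ℝ} (hp : 1 ≤ p) (hx : x ∈ Icc 0 M)
    (hy : y ∈ Icc 0 M) : |x ^ p - y ^ p| ≤ p * M ^ (p - 1) * |x - y| := by
  have hderiv : ∀ z ∈ Icc 0 M, HasDerivWithinAt (fun z : ℝ ↦ z ^ p) (p * z ^ (p - 1)) (Icc 0 M) z :=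
    fun z _ ↦ (hasDerivAt_rpow_const (Or.inr hp)).hasDerivWithinAt
  have hbound : ∀ z ∈ Icc 0 M, ‖p * z ^ (p - 1)‖ ≤ p * M ^ (p - 1) := fun z hz ↦ by
    rw [norm_of_nonneg (by have := hz.1; positivity)]
    gcongr
    exacts [hz.1, hz.2]
  simpa using (convex_Icc 0 M).norm_image_sub_le_of_norm_hasDerivWithin_le hderiv hbound hy hx

end Real

section

variable {E : Type*} [SeminormedAddCommGroup E] {α : ℝ}

lemma norm_mul_abs_rpow_norm_add_sub_left_le (hα : 0 ≤ α) {a b : E} (hba : ‖b‖ ≤ ‖a‖) :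
    ‖a‖ * |‖a + b‖ ^ α - ‖a‖ ^ α| ≤ ‖a‖ * ‖b‖ ^ α + α * 2 ^ α * (‖b‖ * ‖a‖ ^ α) := by
  have hdist : |‖a + b‖ - ‖a‖| ≤ ‖b‖ := by simpa using abs_norm_sub_norm_le (a + b) a
  rcases le_total α 1 with hα₁ | hα₁
  · have : |‖a + b‖ ^ α - ‖a‖ ^ α| ≤ ‖b‖ ^ α :=
      (abs_rpow_sub_rpow_le_rpow_abs_sub hα hα₁ (norm_nonneg _) (norm_nonneg _)).trans
        (by gcongr)
    have : 0 ≤ α * 2 ^ α * (‖b‖ * ‖a‖ ^ α) := by positivity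
    nlinarith [norm_nonneg a]
  · have hA : 0 ≤ 2 * ‖a‖ := by positivity
    have hS : ‖a + b‖ ∈ Icc 0 (2 * ‖a‖) := ⟨norm_nonneg _, (norm_add_le a b).trans (by linarith)⟩
    have hA' : ‖a‖ ∈ Icc 0 (2 * ‖a‖) := ⟨norm_nonneg _, by linarith⟩
    have hpow : (2 * ‖a‖) ^ (α - 1) * (2 * ‖a‖) = 2 ^ α * ‖a‖ ^ α := by
      rw [← rpow_add_one' hA (by linarith), sub_add_cancel, mul_rpow zero_le_two (norm_nonneg a)]
    calc ‖a‖ * |‖a + b‖ ^ α - ‖a‖ ^ α|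
        ≤ ‖a‖ * (α * (2 * ‖a‖) ^ (α - 1) * ‖b‖) := by
          gcongr
          exact (abs_rpow_sub_rpow_le_mul_abs_sub hα₁ hS hA').trans (by gcongr)
      _ ≤ α * ((2 * ‖a‖) ^ (α - 1) * (2 * ‖a‖)) * ‖b‖ := by
          have : 0 ≤ α * (2 * ‖a‖) ^ (α - 1) * ‖b‖ := by positivity
          nlinarith [norm_nonneg a]
      _ = α * 2 ^ α * (‖b‖ * ‖a‖ ^ α) := by rw [hpow]; ring
      _ ≤ ‖a‖ * ‖b‖ ^ α + α * 2 ^ α * (‖b‖ * ‖a‖ ^ α) := le_add_of_nonneg_left (by positivity)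

lemma norm_mul_abs_rpow_norm_add_sub_right_le (hα : 0 ≤ α) {a b : E} (hba : ‖b‖ ≤ ‖a‖) :
    ‖b‖ * |‖a + b‖ ^ α - ‖b‖ ^ α| ≤ 2 ^ α * (‖b‖ * ‖a‖ ^ α) := by
  have hS : ‖a + b‖ ≤ 2 * ‖a‖ := (norm_add_le a b).trans (by linarith)
  have : |‖a + b‖ ^ α - ‖b‖ ^ α| ≤ (2 * ‖a‖) ^ α :=
    abs_sub_le_of_nonneg_of_le (by positivity) (by gcongr) (by positivity)
      (by gcongr; linarith [norm_nonneg a])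
  rw [mul_rpow zero_le_two (norm_nonneg a)] at this
  nlinarith [norm_nonneg b]

theorem norm_rpow_norm_smul_add_sub_le [NormedSpace ℝ E] (hα : 0 ≤ α) (a b : E) :
    ‖‖a + b‖ ^ α • (a + b) - ‖a‖ ^ α • a - ‖b‖ ^ α • b‖ ≤
      (α + 1) * 2 ^ α * (‖a‖ * ‖b‖ ^ α + ‖b‖ * ‖a‖ ^ α) := by
  wlog hba : ‖b‖ ≤ ‖a‖ generalizing a b
  · convert this b a (le_of_not_ge hba) using 1
    · rw [add_comm b a, sub_sub, sub_sub, add_comm (‖a‖ ^ α • a)]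
    · ring
  have hsplit : ‖a + b‖ ^ α • (a + b) - ‖a‖ ^ α • a - ‖b‖ ^ α • b =
      (‖a + b‖ ^ α - ‖a‖ ^ α) • a + (‖a + b‖ ^ α - ‖b‖ ^ α) • b := by
    simp only [sub_smul, smul_add]; abel
  have h₁ := norm_mul_abs_rpow_norm_add_sub_left_le hα hba
  have h₂ := norm_mul_abs_rpow_norm_add_sub_right_le hα hba
  have hone : 1 ≤ (α + 1) * 2 ^ α :=
    one_le_mul_of_one_le_of_one_le (by linarith) (one_le_rpow one_le_two hα)
  have : 0 ≤ ‖a‖ * ‖b‖ ^ α := by positivity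
  have : 0 ≤ ‖b‖ * ‖a‖ ^ α := by positivity
  calc _ ≤ ‖a‖ * |‖a + b‖ ^ α - ‖a‖ ^ α| + ‖b‖ * |‖a + b‖ ^ α - ‖b‖ ^ α| := by
        rw [hsplit]
        refine (norm_add_le _ _).trans_eq ?_
        rw [norm_smul, norm_smul, Real.norm_eq_abs, Real.norm_eq_abs, mul_comm, mul_comm |_|]
    _ ≤ _ := by nlinarith

end

/-- For every `α > 0` there is `C = C(α) > 0` such that for all
complex numbers `a, b`:
`|(a+b)|a+b|^α − a|a|^α − b|b|^α| ≤ C (|a||b|^α + |b||a|^α)`. -/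
theorem power_nonlinearity_difference_bound (α : ℝ) (hα : 0 < α) :
    ∃ C > (0:ℝ), ∀ a b : ℂ,
      ‖(a + b) * ((‖a + b‖ ^ α : ℝ) : ℂ) - a * ((‖a‖ ^ α : ℝ) : ℂ) -
          b * ((‖b‖ ^ α : ℝ) : ℂ)‖ ≤
        C * (‖a‖ * ‖b‖ ^ α + ‖b‖ * ‖a‖ ^ α) := by
  refine ⟨(α + 1) * 2 ^ α, by positivity, fun a b ↦ ?_⟩
  simpa only [mul_comm _ ((_ : ℝ) : ℂ), Complex.real_smul] using
    norm_rpow_norm_smul_add_sub_le hα.le a b
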